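/- Let L have weights (2,2,p,q) and let x = Σ_{i=1}^4 λ_i x_i − c be in normal form (0 ≤ λ_i < p_i) with #{i : λ_i ≥ 1} > 2. Then −x ≤ 2c + ω in L, where ω = c − Σ x_i. -/
import Mathlib


/-- The subgroup of relations `p i • x_i - c` in the free abelian group on `x_1,…,x_n,c`. -/
def Lrel (n : ℕ) (p : Fin n → ℤ) : AddSubgroup ((Fin n → ℤ) × ℤ) :=
  AddSubgroup.closure {v | ∃ i : Fin n, v = (Pi.single i (p i), -1)}

/-- The Geigle-Lenzing group `L = ⟨x_1,…,x_n,c⟩ / ⟨p_i x_i - c⟩`. -/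
abbrev Lgrp (n : ℕ) (p : Fin n → ℤ) : Type :=
  ((Fin n → ℤ) × ℤ) ⧸ Lrel n p

/-- The generator `x_i` of `L`. -/
def Lx (n : ℕ) (p : Fin n → ℤ) (i : Fin n) : Lgrp n p :=
  QuotientAddGroup.mk (Pi.single i 1, 0)

/-- The canonical element `c` of `L`. -/
def Lc (n : ℕ) (p : Fin n → ℤ) : Lgrp n p :=
  QuotientAddGroup.mk (0, 1)

/-- The positive cone `L_+`, the submonoid generated by `x_1,…,x_n,c`. -/
def Lplus (n : ℕ) (p : Fin n → ℤ) : AddSubmonoid (Lgrp n p) :=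
  AddSubmonoid.closure (Set.range (Lx n p) ∪ {Lc n p})

namespace GLpq

variable (p q : ℤ)

/-- The weight sequence `(2,2,p,q)`. -/
def w : Fin 4 → ℤ := ![2, 2, p, q]

/-- The generator `x_i`. -/
def X (i : Fin 4) : Lgrp 4 (w p q) := Lx 4 (w p q) i

/-- The canonical element `c`. -/
def C : Lgrp 4 (w p q) := Lc 4 (w p q)

/-- The positive cone `L_+`. -/
def pos : AddSubmonoid (Lgrp 4 (w p q)) := Lplus 4 (w p q)

/-- The element `Σ l_i x_i`. -/
def elt (l : Fin 4 → ℤ) : Lgrp 4 (w p q) := ∑ t, l t • X p q t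

/-- `s = x_1 + x_2 + x_3 + x_4`. -/
def s : Lgrp 4 (w p q) := ∑ t, X p q t

/-- The dualizing element `ω = c − s`. -/
def om : Lgrp 4 (w p q) := C p q - s p q

/-- The partial order: `a ≤ b` iff `b − a ∈ L_+`. -/
def le (a b : Lgrp 4 (w p q)) : Prop := b - a ∈ pos p q

/-- The condition for `Σ l_i x_i` to lie in `[s, s+δ]`:
`l_1 = l_2 = 1`, `1 ≤ l_3 ≤ p−1`, `1 ≤ l_4 ≤ q−1`. -/
def inInterval (l : Fin 4 → ℤ) : Prop :=
  l 0 = 1 ∧ l 1 = 1 ∧ 1 ≤ l 2 ∧ l 2 ≤ p - 1 ∧ 1 ≤ l 3 ∧ l 3 ≤ q - 1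

namespace Aux

lemma rel (i : Fin 4) : (w p q i) • X p q i = C p q := by
  have h : ((Pi.single i (w p q i), -1) : (Fin 4 → ℤ) × ℤ) ∈ Lrel 4 (w p q) :=
    AddSubgroup.subset_closure ⟨i, rfl⟩
  show (w p q i) • QuotientAddGroup.mk (Pi.single i 1, 0) = QuotientAddGroup.mk (0, 1)
  rw [← QuotientAddGroup.mk_zsmul, QuotientAddGroup.eq]
  have e : -((w p q i) • ((Pi.single i 1, 0) : (Fin 4 → ℤ) × ℤ)) + (0, 1)
      = -(Pi.single i (w p q i), -1) := by
    refine Prod.ext ?_ ?_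
    · funext t
      simp [Pi.single_apply, mul_ite]
    · simp
  rw [e]
  exact AddSubgroup.neg_mem _ h

lemma C_mem : C p q ∈ pos p q :=
  AddSubmonoid.subset_closure (Or.inr rfl)

lemma X_mem (i : Fin 4) : X p q i ∈ pos p q :=
  AddSubmonoid.subset_closure (Or.inl ⟨i, rfl⟩)

lemma zsmul_mem {x : Lgrp 4 (w p q)} (hx : x ∈ pos p q) {n : ℤ} (hn : 0 ≤ n) :
    n • x ∈ pos p q := by
  lift n to ℕ using hn
  rw [natCast_zsmul]
  exact nsmul_mem hx n

lemma final (a : Fin 4 → ℤ) (b : ℤ) (hb : 0 ≤ b) (ha : ∀ i, 0 ≤ a i) :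
    b • C p q + ∑ t, a t • X p q t ∈ pos p q := by
  refine AddSubmonoid.add_mem _ (zsmul_mem p q (C_mem p q) hb) ?_
  exact AddSubmonoid.sum_mem _ fun t _ => zsmul_mem p q (X_mem p q t) (ha t)

lemma shift (a : Fin 4 → ℤ) (b : ℤ) (j : Fin 4) :
    (b + 1) • C p q + ∑ t, a t • X p q t
      = b • C p q + ∑ t, (a t + if t = j then w p q j else 0) • X p q t := by
  have h : ∀ t, (a t + if t = j then w p q j else 0) • X p q t
      = a t • X p q t + (if t = j then w p q j • X p q t else 0) := by
    intro t
    by_cases htj : t = j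
    · subst htj; simp [add_zsmul]
    · simp [htj]
  rw [Finset.sum_congr rfl fun t _ => h t, Finset.sum_add_distrib,
    Finset.sum_ite_eq' Finset.univ j, if_pos (Finset.mem_univ j), rel p q j, add_zsmul, one_zsmul]
  abel

end Aux

end GLpq

open GLpq in
/-- If `x = Σ λ_i x_i − c` is in normal form with more than two `λ_i ≥ 1`,
then `−x ≤ 2c + ω`. -/
theorem neg_x_le_two_c_add_omega (p q : ℤ) (hp : 2 ≤ p) (hq : 2 ≤ q) (lam : Fin 4 → ℤ)
    (hlam : ∀ i, 0 ≤ lam i ∧ lam i < w p q i)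
    (hcard : 2 < (Finset.univ.filter fun i => 1 ≤ lam i).card) :
    le p q (-(elt p q lam - C p q)) ((2 : ℤ) • C p q + om p q) := by
  show (2 : ℤ) • C p q + om p q - (-(elt p q lam - C p q)) ∈ pos p q
  have key : (2 : ℤ) • C p q + om p q - (-(elt p q lam - C p q))
      = (2 : ℤ) • C p q + ∑ t, (lam t - 1) • X p q t := by
    simp only [om, s, elt, sub_smul, one_smul, Finset.sum_sub_distrib]
    abel
  rw [key]
  by_cases hall : ∀ i, 1 ≤ lam i
  · exact Aux.final p q _ 2 (by norm_num) fun i => by have := hall i; omega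
  · push_neg at hall
    obtain ⟨j, hj⟩ := hall
    have hj0 : lam j = 0 := by have := (hlam j).1; omega
    have hother : ∀ t, t ≠ j → 1 ≤ lam t := by
      intro t ht
      by_contra hnt
      have hsub : (Finset.univ.filter fun i => 1 ≤ lam i)
          ⊆ (Finset.univ : Finset (Fin 4)) \ {j, t} := by
        intro i hi
        simp only [Finset.mem_filter] at hi
        simp only [Finset.mem_sdiff, Finset.mem_univ, true_and, Finset.mem_insert,
          Finset.mem_singleton]
        rintro (rfl | rfl) <;> omega
      have hc := Finset.card_le_card hsub
      have h2 : ({j, t} : Finset (Fin 4)).card = 2 := by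
        rw [Finset.card_insert_of_notMem (by simpa using (Ne.symm ht)),
          Finset.card_singleton]
      have h3 : ((Finset.univ : Finset (Fin 4)) \ {j, t}).card
          = 4 - 2 := by
        rw [Finset.card_sdiff_of_subset (Finset.subset_univ _), h2]
        rfl
      omega
    have hwj : 2 ≤ w p q j := by
      fin_cases j <;> simp [w] <;> assumption
    rw [show (2 : ℤ) = 1 + 1 by norm_num, Aux.shift p q _ 1 j]
    refine Aux.final p q _ 1 (by norm_num) fun i => ?_
    by_cases hij : i = j
    · subst hij; simp only [if_true]; omega
    · simp only [hij, if_false]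
      have := hother i hij
      omega
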